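/- Let a_1, …, a_K ∈ ℝ^n and b_1, …, b_L ∈ ℝ^n, and let α_1, …, α_K, β_1, …, β_L ≥ 0 satisfy ∑ α_i = 1, ∑ α_i a_i = 0, ∑ β_j = 1, ∑ β_j b_j = 0. Suppose M, μ > 0 are such that ‖a_i − a_j‖_4 ≤ M for all i ≠ j, ‖b_i − b_j‖_4 ≤ M for all i ≠ j, and ‖a_i − b_j‖_4 ≥ μ for all i ∈ [K], j ∈ [L]. Then M^4/μ^4 ≥ 2/(2 − ∑_{i=1}^K α_i^2 − ∑_{j=1}^L β_j^2). -/
import Mathlib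

open Finset

/-- The 4-norm on `ℝ^n`. -/
noncomputable def norm4 {n : ℕ} (x : Fin n → ℝ) : ℝ :=
  (∑ m, (x m) ^ 4) ^ ((1 : ℝ) / 4)

lemma norm4_pow {n : ℕ} (x : Fin n → ℝ) : norm4 x ^ 4 = ∑ m, (x m) ^ 4 := by
  have h : (0:ℝ) ≤ ∑ m, (x m) ^ 4 := by positivity
  unfold norm4
  rw [← Real.rpow_natCast (_ ^ ((1:ℝ)/4)) 4, ← Real.rpow_mul h]
  norm_num

lemma norm4_nonneg {n : ℕ} (x : Fin n → ℝ) : 0 ≤ norm4 x := by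
  unfold norm4; positivity

lemma expand_self {K : ℕ} (α x : Fin K → ℝ) (h1 : ∑ i, α i = 1) (h0 : ∑ i, α i * x i = 0) :
    ∑ i, ∑ j, α i * α j * (x i - x j)^4
      = 2 * ∑ i, α i * x i ^ 4 + 6 * (∑ i, α i * x i ^ 2)^2 := by
  have e : ∑ i, ∑ j, α i * α j * (x i - x j)^4
      = ∑ i, ∑ j, (α i * (α j * x j ^ 4) + (α i * x i ^ 4) * α j
        - 4 * ((α i * x i ^ 3) * (α j * x j)) + 6 * ((α i * x i ^ 2) * (α j * x j ^ 2))
        - 4 * ((α i * x i) * (α j * x j ^ 3))) := by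
    apply Finset.sum_congr rfl; intro i _; apply Finset.sum_congr rfl; intro j _; ring
  rw [e]
  simp only [Finset.sum_add_distrib, Finset.sum_sub_distrib, ← Finset.mul_sum, ← Finset.sum_mul]
  rw [h1, h0]
  ring

lemma expand_cross {K L : ℕ} (α x : Fin K → ℝ) (β y : Fin L → ℝ)
    (hα0 : ∑ i, α i * x i = 0) (hβ1 : ∑ j, β j = 1) (hβ0 : ∑ j, β j * y j = 0)
    (hα1 : ∑ i, α i = 1) :
    ∑ i, ∑ j, α i * β j * (x i - y j)^4
      = ∑ i, α i * x i ^ 4 + ∑ j, β j * y j ^ 4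
        + 6 * (∑ i, α i * x i ^ 2) * (∑ j, β j * y j ^ 2) := by
  have e : ∑ i, ∑ j, α i * β j * (x i - y j)^4
      = ∑ i, ∑ j, (α i * (β j * y j ^ 4) + (α i * x i ^ 4) * β j
        - 4 * ((α i * x i ^ 3) * (β j * y j)) + 6 * ((α i * x i ^ 2) * (β j * y j ^ 2))
        - 4 * ((α i * x i) * (β j * y j ^ 3))) := by
    apply Finset.sum_congr rfl; intro i _; apply Finset.sum_congr rfl; intro j _; ring
  rw [e]
  simp only [Finset.sum_add_distrib, Finset.sum_sub_distrib, ← Finset.mul_sum, ← Finset.sum_mul]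
  rw [hα1, hα0, hβ1, hβ0]
  ring

theorem stmt12 (n K L : ℕ) (a : Fin K → Fin n → ℝ) (b : Fin L → Fin n → ℝ)
    (α : Fin K → ℝ) (β : Fin L → ℝ)
    (hα : ∀ i, 0 ≤ α i) (hβ : ∀ j, 0 ≤ β j)
    (hαsum : ∑ i, α i = 1) (hαbary : ∑ i, α i • a i = 0)
    (hβsum : ∑ j, β j = 1) (hβbary : ∑ j, β j • b j = 0)
    (M μ : ℝ) (hM : 0 < M) (hμ : 0 < μ)
    (haa : ∀ i j, i ≠ j → norm4 (a i - a j) ≤ M)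
    (hbb : ∀ i j, i ≠ j → norm4 (b i - b j) ≤ M)
    (hab : ∀ i j, μ ≤ norm4 (a i - b j)) :
    2 / (2 - (∑ i, (α i) ^ 2) - ∑ j, (β j) ^ 2) ≤ M ^ 4 / μ ^ 4 := by
  have hA0 : ∀ m, ∑ i, α i * a i m = 0 := by
    intro m
    have := congrFun hαbary m
    simpa [Finset.sum_apply] using this
  have hB0 : ∀ m, ∑ j, β j * b j m = 0 := by
    intro m
    have := congrFun hβbary m
    simpa [Finset.sum_apply] using this
  set SAB := ∑ i, ∑ j, α i * β j * norm4 (a i - b j) ^ 4 with hSABdef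
  set SAA := ∑ i, ∑ j, α i * α j * norm4 (a i - a j) ^ 4 with hSAAdef
  set SBB := ∑ i, ∑ j, β i * β j * norm4 (b i - b j) ^ 4 with hSBBdef
  -- coordinate forms
  have hSAB : SAB = ∑ m, ((∑ i, α i * a i m ^ 4) + (∑ j, β j * b j m ^ 4)
      + 6 * (∑ i, α i * a i m ^ 2) * (∑ j, β j * b j m ^ 2)) := by
    rw [hSABdef]
    have : ∀ i j, α i * β j * norm4 (a i - b j) ^ 4
        = ∑ m, α i * β j * (a i m - b j m) ^ 4 := by
      intro i j
      rw [norm4_pow, Finset.mul_sum]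
      simp [Pi.sub_apply]
    simp_rw [this]
    rw [show (∑ i, ∑ j, ∑ m, α i * β j * (a i m - b j m) ^ 4)
        = ∑ m, ∑ i, ∑ j, α i * β j * (a i m - b j m) ^ 4 from by
      rw [Finset.sum_congr rfl fun i _ => Finset.sum_comm]
      exact Finset.sum_comm]
    exact Finset.sum_congr rfl fun m _ =>
      expand_cross α (fun i => a i m) β (fun j => b j m) (hA0 m) hβsum (hB0 m) hαsum
  have hSAA : SAA = ∑ m, (2 * (∑ i, α i * a i m ^ 4) + 6 * (∑ i, α i * a i m ^ 2) ^ 2) := by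
    rw [hSAAdef]
    have : ∀ i j, α i * α j * norm4 (a i - a j) ^ 4
        = ∑ m, α i * α j * (a i m - a j m) ^ 4 := by
      intro i j
      rw [norm4_pow, Finset.mul_sum]
      simp [Pi.sub_apply]
    simp_rw [this]
    rw [show (∑ i, ∑ j, ∑ m, α i * α j * (a i m - a j m) ^ 4)
        = ∑ m, ∑ i, ∑ j, α i * α j * (a i m - a j m) ^ 4 from by
      rw [Finset.sum_congr rfl fun i _ => Finset.sum_comm]
      exact Finset.sum_comm]
    exact Finset.sum_congr rfl fun m _ =>
      expand_self α (fun i => a i m) hαsum (hA0 m)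
  have hSBB : SBB = ∑ m, (2 * (∑ j, β j * b j m ^ 4) + 6 * (∑ j, β j * b j m ^ 2) ^ 2) := by
    rw [hSBBdef]
    have : ∀ i j, β i * β j * norm4 (b i - b j) ^ 4
        = ∑ m, β i * β j * (b i m - b j m) ^ 4 := by
      intro i j
      rw [norm4_pow, Finset.mul_sum]
      simp [Pi.sub_apply]
    simp_rw [this]
    rw [show (∑ i, ∑ j, ∑ m, β i * β j * (b i m - b j m) ^ 4)
        = ∑ m, ∑ i, ∑ j, β i * β j * (b i m - b j m) ^ 4 from by
      rw [Finset.sum_congr rfl fun i _ => Finset.sum_comm]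
      exact Finset.sum_comm]
    exact Finset.sum_congr rfl fun m _ =>
      expand_self β (fun j => b j m) hβsum (hB0 m)
  -- AM-GM : 2 * SAB ≤ SAA + SBB
  have hAMGM : 2 * SAB ≤ SAA + SBB := by
    rw [hSAB, hSAA, hSBB, Finset.mul_sum, ← Finset.sum_add_distrib]
    apply Finset.sum_le_sum
    intro m _
    nlinarith [sq_nonneg ((∑ i, α i * a i m ^ 2) - (∑ j, β j * b j m ^ 2))]
  -- lower bound on SAB
  have hlow : μ ^ 4 ≤ SAB := by
    rw [hSABdef]
    calc μ ^ 4 = ∑ i, ∑ j, α i * β j * μ ^ 4 := by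
          simp only [← Finset.sum_mul, ← Finset.mul_sum]
          rw [hβsum]
          simp only [mul_one, ← Finset.sum_mul, hαsum, one_mul]
      _ ≤ ∑ i, ∑ j, α i * β j * norm4 (a i - b j) ^ 4 := by
          apply Finset.sum_le_sum; intro i _; apply Finset.sum_le_sum; intro j _
          have h1 : μ ^ 4 ≤ norm4 (a i - b j) ^ 4 :=
            pow_le_pow_left₀ hμ.le (hab i j) 4
          exact mul_le_mul_of_nonneg_left h1 (mul_nonneg (hα i) (hβ j))
  -- upper bound on SAA
  have hupA : SAA ≤ M ^ 4 * (1 - ∑ i, α i ^ 2) := by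
    rw [hSAAdef]
    calc (∑ i, ∑ j, α i * α j * norm4 (a i - a j) ^ 4)
        ≤ ∑ i, ∑ j, (α i * α j * M ^ 4 - if i = j then α i * α j * M ^ 4 else 0) := by
          apply Finset.sum_le_sum; intro i _; apply Finset.sum_le_sum; intro j _
          by_cases h : i = j
          · subst h
            have h0 : norm4 (0 : Fin n → ℝ) ^ 4 = 0 := by rw [norm4_pow]; simp
            simp [sub_self, h0]
          · simp only [h, if_false, sub_zero]
            have h1 : norm4 (a i - a j) ^ 4 ≤ M ^ 4 :=
              pow_le_pow_left₀ (norm4_nonneg _) (haa i j h) 4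
            exact mul_le_mul_of_nonneg_left h1 (mul_nonneg (hα i) (hα j))
      _ = M ^ 4 * (1 - ∑ i, α i ^ 2) := by
          simp only [Finset.sum_sub_distrib, Finset.sum_ite_eq, Finset.mem_univ, if_true,
            ← sq, ← Finset.sum_mul, ← Finset.mul_sum, hαsum, mul_one, one_mul]
          ring
  have hupB : SBB ≤ M ^ 4 * (1 - ∑ j, β j ^ 2) := by
    rw [hSBBdef]
    calc (∑ i, ∑ j, β i * β j * norm4 (b i - b j) ^ 4)
        ≤ ∑ i, ∑ j, (β i * β j * M ^ 4 - if i = j then β i * β j * M ^ 4 else 0) := by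
          apply Finset.sum_le_sum; intro i _; apply Finset.sum_le_sum; intro j _
          by_cases h : i = j
          · subst h
            have h0 : norm4 (0 : Fin n → ℝ) ^ 4 = 0 := by rw [norm4_pow]; simp
            simp [sub_self, h0]
          · simp only [h, if_false, sub_zero]
            have h1 : norm4 (b i - b j) ^ 4 ≤ M ^ 4 :=
              pow_le_pow_left₀ (norm4_nonneg _) (hbb i j h) 4
            exact mul_le_mul_of_nonneg_left h1 (mul_nonneg (hβ i) (hβ j))
      _ = M ^ 4 * (1 - ∑ j, β j ^ 2) := by
          simp only [Finset.sum_sub_distrib, Finset.sum_ite_eq, Finset.mem_univ, if_true,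
            ← sq, ← Finset.sum_mul, ← Finset.mul_sum, hβsum, mul_one, one_mul]
          ring
  -- conclusion
  have hkey : 2 * μ ^ 4 ≤ M ^ 4 * (2 - (∑ i, α i ^ 2) - ∑ j, β j ^ 2) := by nlinarith
  have hμ4 : (0:ℝ) < μ ^ 4 := by positivity
  have hM4 : (0:ℝ) < M ^ 4 := by positivity
  have hden : 0 < 2 - (∑ i, α i ^ 2) - ∑ j, β j ^ 2 := by nlinarith
  rw [div_le_div_iff₀ hden hμ4]
  nlinarith
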